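/- arXiv:1112.2399 — 5 statements merged into one kernel-verified Lean document; each statement's English description precedes it below -/
import Mathlib

section
/- For each k ≥ 1, the map j_k is an order embedding for the dominance-type order on pairs of partitions: for pairs of partitions τ, τ' with |τ| = |τ'|, one has τ ≤ τ' if and only if j_k(τ) ≤ j_k(τ'). -/
open Finset

/-- A partition: weakly decreasing, finitely supported sequence of naturals (0-indexed). -/
def IsPartition (μ : ℕ → ℕ) : Prop :=
  Antitone μ ∧ ∃ N, ∀ i, N ≤ i → μ i = 0

/-- Membership in `P_2(n)`: a pair of partitions of total size `n`. -/
def PairP2 (n : ℕ) (p : (ℕ → ℕ) × (ℕ → ℕ)) : Prop :=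
  IsPartition p.1 ∧ IsPartition p.2 ∧
    ∃ N, (∀ i, N ≤ i → p.1 i = 0 ∧ p.2 i = 0) ∧
      (∑ i ∈ range N, (p.1 i + p.2 i)) = n

/-- The dominance-type order on pairs of partitions (0-indexed: `p.1 0` is `μ_1`). -/
def PairLE (p q : (ℕ → ℕ) × (ℕ → ℕ)) : Prop :=
  (∀ j, ∑ i ∈ range j, (p.1 i + p.2 i) ≤ ∑ i ∈ range j, (q.1 i + q.2 i)) ∧
  (∀ j, (∑ i ∈ range j, (p.1 i + p.2 i)) + p.1 j ≤
        (∑ i ∈ range j, (q.1 i + q.2 i)) + q.1 j)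

/-- Add 1 to the first `m` entries of a sequence. -/
def bump (m : ℕ) (μ : ℕ → ℕ) : ℕ → ℕ := fun i => if i < m then μ i + 1 else μ i

/-- The map `j_k` on pairs of partitions. -/
def jmap (k : ℕ) (p : (ℕ → ℕ) × (ℕ → ℕ)) : (ℕ → ℕ) × (ℕ → ℕ) :=
  (bump ((k + 1) / 2) p.1, bump (k / 2) p.2)

lemma bump_apply (m : ℕ) (μ : ℕ → ℕ) (i : ℕ) :
    bump m μ i = μ i + if i < m then 1 else 0 := by
  unfold bump
  split_ifs <;> rfl

lemma sum_range_bump (m : ℕ) (μ : ℕ → ℕ) (j : ℕ) :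
    ∑ i ∈ range j, bump m μ i = ∑ i ∈ range j, μ i + min j m := by
  have hcount : {i ∈ range j | i < m} = range (min j m) := by ext; simp
  simp only [bump_apply, sum_add_distrib, sum_boole, hcount, card_range, Nat.cast_id]

lemma sum_range_bump_add_bump (a b : ℕ) (μ ν : ℕ → ℕ) (j : ℕ) :
    ∑ i ∈ range j, (bump a μ i + bump b ν i) =
      ∑ i ∈ range j, (μ i + ν i) + (min j a + min j b) := by
  rw [sum_add_distrib, sum_add_distrib, sum_range_bump, sum_range_bump]
  ring

/- `j_k` raises every partial sum of `μ + ν`, and every `μ_j`, by an amount depending only on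
`k` and `j`, so both sides of each defining inequality of `PairLE` move together. -/
theorem jmap_orderEmbedding_general (k : ℕ)
    (p q : (ℕ → ℕ) × (ℕ → ℕ)) :
    PairLE p q ↔ PairLE (jmap k p) (jmap k q) := by
  simp only [PairLE, jmap, sum_range_bump_add_bump]
  simp only [bump_apply]
  refine and_congr (forall_congr' fun j => ?_) (forall_congr' fun j => ?_) <;> omega

/-- for `k ≥ 1`, `j_k` is an order embedding for the dominance-type
order on pairs of partitions of the same total size. -/
theorem jmap_orderEmbedding (k n : ℕ) (hk : 1 ≤ k)
    (p q : (ℕ → ℕ) × (ℕ → ℕ)) (hp : PairP2 n p) (hq : PairP2 n q) :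
    PairLE p q ↔ PairLE (jmap k p) (jmap k q) :=
  jmap_orderEmbedding_general k p q
end

section
/- The map Φ_C is well defined: for every (μ)(ν) ∈ X_C^{*2}, the pair (μ̃)(ν̃) defined by μ̃_1 = μ_1, μ̃_{i+1} = ⌊(μ_{i+1}+ν_i+1)/2⌋ if ν_i < μ_{i+1}−1 and μ̃_{i+1} = μ_{i+1} otherwise, ν̃_i = ⌊(μ_{i+1}+ν_i)/2⌋ if ν_i < μ_{i+1}−1 and ν̃_i = ν_i otherwise, is a pair of partitions lying in X_C^1 (i.e. μ̃_{i+1}−1 ≤ ν̃_i ≤ μ̃_i+1 for all i), and moreover |μ̃|+|ν̃| = |μ|+|ν|. -/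
open Finset

/-- The map `Φ_C` on pairs of partitions (0-indexed). -/
def PhiC (p : (ℕ → ℕ) × (ℕ → ℕ)) : (ℕ → ℕ) × (ℕ → ℕ) :=
  (fun i => match i with
    | 0 => p.1 0
    | j + 1 =>
        if p.2 j + 1 < p.1 (j + 1) then (p.1 (j + 1) + p.2 j + 1) / 2
        else p.1 (j + 1),
   fun i =>
    if p.2 i + 1 < p.1 (i + 1) then (p.1 (i + 1) + p.2 i) / 2 else p.2 i)

/-!
`Φ_C` acts independently on each pair `(μ_{i+1}, ν_i)`: when `ν_i < μ_{i+1} - 1` the pair is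
replaced by the ceiling and floor of its mean, otherwise it is kept. This local step preserves
`μ_{i+1} + ν_i`, is monotone in both entries and never exceeds `μ_{i+1}` in its first entry;
monotonicity gives that `μ̃` and `ν̃` are partitions and, together with `ν ≤ μ + 1`, the upper
interlacing bound. The size is preserved because `|μ| + |ν| = μ_1 + ∑ᵢ (μ_{i+1} + ν_i)`.
-/

def balance (a b : ℕ) : ℕ × ℕ :=
  if b + 1 < a then ((a + b + 1) / 2, (a + b) / 2) else (a, b)

section Balance

variable {a b a' b' : ℕ}

theorem balance_fst_add_snd (a b : ℕ) : (balance a b).1 + (balance a b).2 = a + b := by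
  unfold balance; split_ifs <;> omega

theorem balance_fst_le_snd_add_one (a b : ℕ) : (balance a b).1 ≤ (balance a b).2 + 1 := by
  unfold balance; split_ifs <;> omega

theorem balance_fst_le (a b : ℕ) : (balance a b).1 ≤ a := by
  unfold balance; split_ifs <;> omega

theorem balance_zero_left (b : ℕ) : balance 0 b = (0, b) := by
  simp [balance]

theorem balance_mono (ha : a ≤ a') (hb : b ≤ b') : balance a b ≤ balance a' b' := by
  rw [Prod.le_def]; unfold balance; split_ifs <;> omega

theorem balance_snd_le_fst_add_one (ha : a ≤ a') (hb : b ≤ b') (hba : b ≤ a' + 1) :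
    (balance a b).2 ≤ (balance a' b').1 + 1 := by
  unfold balance; split_ifs <;> omega

end Balance

theorem sum_range_succ_add_eq_add_sum_shift {M : Type*} [AddCommMonoid M] (f g : ℕ → M) (n : ℕ) :
    ∑ i ∈ range (n + 1), (f i + g i) = f 0 + ∑ i ∈ range n, (f (i + 1) + g i) + g n := by
  rw [sum_add_distrib, sum_add_distrib, sum_range_succ' f, sum_range_succ g]
  abel

section PhiC

variable {p : (ℕ → ℕ) × (ℕ → ℕ)}

theorem phiC_fst_zero (p : (ℕ → ℕ) × (ℕ → ℕ)) : (PhiC p).1 0 = p.1 0 := rfl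

theorem phiC_fst_succ (p : (ℕ → ℕ) × (ℕ → ℕ)) (i : ℕ) :
    (PhiC p).1 (i + 1) = (balance (p.1 (i + 1)) (p.2 i)).1 := by
  simp only [PhiC, balance]; split_ifs <;> rfl

theorem phiC_snd (p : (ℕ → ℕ) × (ℕ → ℕ)) (i : ℕ) :
    (PhiC p).2 i = (balance (p.1 (i + 1)) (p.2 i)).2 := by
  simp only [PhiC, balance]; split_ifs <;> rfl

theorem phiC_fst_antitone (h1 : Antitone p.1) (h2 : Antitone p.2) : Antitone (PhiC p).1 := by
  refine antitone_nat_of_succ_le fun i => ?_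
  cases i with
  | zero =>
    rw [phiC_fst_succ, phiC_fst_zero]
    exact (balance_fst_le _ _).trans (h1 (Nat.zero_le 1))
  | succ j =>
    rw [phiC_fst_succ, phiC_fst_succ]
    exact (Prod.le_def.mp (balance_mono (h1 j.succ.le_succ) (h2 j.le_succ))).1

theorem phiC_snd_antitone (h1 : Antitone p.1) (h2 : Antitone p.2) : Antitone (PhiC p).2 :=
  antitone_nat_of_succ_le fun i => by
    rw [phiC_snd, phiC_snd]
    exact (Prod.le_def.mp (balance_mono (h1 i.succ.le_succ) (h2 i.le_succ))).2

theorem phiC_eq_zero_of_le {N : ℕ} (hN : ∀ i, N ≤ i → p.1 i = 0 ∧ p.2 i = 0) {i : ℕ}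
    (hi : N ≤ i) : (PhiC p).1 i = 0 ∧ (PhiC p).2 i = 0 := by
  have hsnd : (PhiC p).2 i = 0 := by
    rw [phiC_snd, (hN (i + 1) (by omega)).1, balance_zero_left, (hN i hi).2]
  cases i with
  | zero => exact ⟨(hN 0 hi).1, hsnd⟩
  | succ j =>
    rw [phiC_fst_succ, (hN (j + 1) hi).1, balance_zero_left]
    exact ⟨rfl, hsnd⟩

theorem exists_phiC_eq_zero (h1 : IsPartition p.1) (h2 : IsPartition p.2) :
    ∃ N, ∀ i, N ≤ i → (PhiC p).1 i = 0 ∧ (PhiC p).2 i = 0 := by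
  obtain ⟨N₁, hN₁⟩ := h1.2
  obtain ⟨N₂, hN₂⟩ := h2.2
  exact ⟨max N₁ N₂, fun i hi => phiC_eq_zero_of_le
    (fun j hj => ⟨hN₁ j (le_of_max_le_left hj), hN₂ j (le_of_max_le_right hj)⟩) hi⟩

theorem phiC_fst_succ_le_snd_add_one (p : (ℕ → ℕ) × (ℕ → ℕ)) (i : ℕ) :
    (PhiC p).1 (i + 1) ≤ (PhiC p).2 i + 1 := by
  rw [phiC_fst_succ, phiC_snd]
  exact balance_fst_le_snd_add_one _ _

theorem phiC_snd_le_fst_add_one (h1 : Antitone p.1) (h2 : Antitone p.2)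
    (hC : ∀ i, p.2 i ≤ p.1 i + 1) (i : ℕ) : (PhiC p).2 i ≤ (PhiC p).1 i + 1 := by
  rw [phiC_snd]
  cases i with
  | zero =>
    calc (balance (p.1 1) (p.2 0)).2 ≤ (balance (p.1 0) (p.2 0)).1 + 1 :=
          balance_snd_le_fst_add_one (h1 (Nat.zero_le 1)) le_rfl (hC 0)
      _ ≤ (PhiC p).1 0 + 1 := Nat.add_le_add_right (balance_fst_le _ _) 1
  | succ j =>
    rw [phiC_fst_succ]
    exact balance_snd_le_fst_add_one (h1 j.succ.le_succ) (h2 j.le_succ) (hC (j + 1))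

theorem sum_phiC {N : ℕ} (hN : p.1 N = 0) :
    ∑ i ∈ range N, ((PhiC p).1 i + (PhiC p).2 i) = ∑ i ∈ range N, (p.1 i + p.2 i) := by
  cases N with
  | zero => rfl
  | succ M =>
    have hlast : (PhiC p).2 M = p.2 M := by rw [phiC_snd, hN, balance_zero_left]
    rw [sum_range_succ_add_eq_add_sum_shift, sum_range_succ_add_eq_add_sum_shift, hlast,
      phiC_fst_zero]
    congr 2
    refine sum_congr rfl fun i _ => ?_
    rw [phiC_fst_succ, phiC_snd, balance_fst_add_snd]

end PhiC

/-- `Φ_C` is well defined: it sends `X_C^{*2}` into `X_C^1` and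
preserves the total size. -/
theorem phiC_wellDefined (p : (ℕ → ℕ) × (ℕ → ℕ))
    (h1 : IsPartition p.1) (h2 : IsPartition p.2)
    (hC : ∀ i, p.2 i ≤ p.1 i + 1) :
    IsPartition (PhiC p).1 ∧ IsPartition (PhiC p).2 ∧
    (∀ i, (PhiC p).1 (i + 1) ≤ (PhiC p).2 i + 1 ∧ (PhiC p).2 i ≤ (PhiC p).1 i + 1) ∧
    (∀ N, (∀ i, N ≤ i → p.1 i = 0 ∧ p.2 i = 0) →
      (∀ i, N ≤ i → (PhiC p).1 i = 0 ∧ (PhiC p).2 i = 0) ∧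
      ∑ i ∈ range N, ((PhiC p).1 i + (PhiC p).2 i)
        = ∑ i ∈ range N, (p.1 i + p.2 i)) := by
  obtain ⟨N, hN⟩ := exists_phiC_eq_zero h1 h2
  refine ⟨⟨phiC_fst_antitone h1.1 h2.1, N, fun i hi => (hN i hi).1⟩,
    ⟨phiC_snd_antitone h1.1 h2.1, N, fun i hi => (hN i hi).2⟩,
    fun i => ⟨phiC_fst_succ_le_snd_add_one p i, phiC_snd_le_fst_add_one h1.1 h2.1 hC i⟩,
    fun M hM => ⟨fun i hi => phiC_eq_zero_of_le hM hi, sum_phiC (hM M le_rfl).1⟩⟩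
end

section
/- The map Φ_B is well defined: for every (μ)(ν) ∈ X_B^{*2}, the pair (μ̃)(ν̃) defined by μ̃_i = ⌊(μ_i+ν_i−1)/2⌋ if ν_i > μ_i+2 and μ̃_i = μ_i otherwise, and ν̃_i = ⌊(μ_i+ν_i+2)/2⌋ if ν_i > μ_i+2 and ν̃_i = ν_i otherwise, is a pair of partitions lying in X_B^1 (i.e. μ̃_{i+1} ≤ ν̃_i ≤ μ̃_i+2 for all i), and |μ̃|+|ν̃| = |μ|+|ν|. -/
open Finset

/-- The map `Φ_B` on pairs of partitions (0-indexed). -/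
def PhiB (p : (ℕ → ℕ) × (ℕ → ℕ)) : (ℕ → ℕ) × (ℕ → ℕ) :=
  (fun i => if p.1 i + 2 < p.2 i then (p.1 i + p.2 i - 1) / 2 else p.1 i,
   fun i => if p.1 i + 2 < p.2 i then (p.1 i + p.2 i + 2) / 2 else p.2 i)

/-- `Φ_B` is well defined: it sends `X_B^{*2}` into `X_B^1` and
preserves the total size. -/
theorem phiB_wellDefined (p : (ℕ → ℕ) × (ℕ → ℕ))
    (h1 : IsPartition p.1) (h2 : IsPartition p.2)
    (hB : ∀ i, p.1 (i + 1) ≤ p.2 i) :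
    IsPartition (PhiB p).1 ∧ IsPartition (PhiB p).2 ∧
    (∀ i, (PhiB p).1 (i + 1) ≤ (PhiB p).2 i ∧ (PhiB p).2 i ≤ (PhiB p).1 i + 2) ∧
    (∀ N, (∀ i, N ≤ i → p.1 i = 0 ∧ p.2 i = 0) →
      (∀ i, N ≤ i → (PhiB p).1 i = 0 ∧ (PhiB p).2 i = 0) ∧
      ∑ i ∈ range N, ((PhiB p).1 i + (PhiB p).2 i)
        = ∑ i ∈ range N, (p.1 i + p.2 i)) := by
  obtain ⟨hm, N1, hN1⟩ := h1
  obtain ⟨hn, N2, hN2⟩ := h2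
  have key : ∀ i, ((PhiB p).1 (i + 1) ≤ (PhiB p).1 i ∧
      (PhiB p).2 (i + 1) ≤ (PhiB p).2 i) ∧
      ((PhiB p).1 (i + 1) ≤ (PhiB p).2 i ∧ (PhiB p).2 i ≤ (PhiB p).1 i + 2) := by
    intro i
    have h1' := hm (Nat.le_add_right i 1)
    have h2' := hn (Nat.le_add_right i 1)
    have h3 := hB i
    simp only [PhiB]
    split_ifs <;> omega
  have hz : ∀ i, p.1 i = 0 → p.2 i = 0 →
      (PhiB p).1 i = 0 ∧ (PhiB p).2 i = 0 := by
    intro i h h'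
    simp [PhiB, h, h']
  have hsum : ∀ i, (PhiB p).1 i + (PhiB p).2 i = p.1 i + p.2 i := by
    intro i
    simp only [PhiB]
    split_ifs <;> omega
  refine ⟨⟨antitone_nat_of_succ_le fun i => (key i).1.1,
      max N1 N2, fun i hi => (hz i (hN1 i (le_trans (le_max_left _ _) hi))
        (hN2 i (le_trans (le_max_right _ _) hi))).1⟩,
    ⟨antitone_nat_of_succ_le fun i => (key i).1.2,
      max N1 N2, fun i hi => (hz i (hN1 i (le_trans (le_max_left _ _) hi))
        (hN2 i (le_trans (le_max_right _ _) hi))).2⟩,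
    fun i => (key i).2, ?_⟩
  intro N hN
  refine ⟨fun i hi => hz i (hN i hi).1 (hN i hi).2, ?_⟩
  exact Finset.sum_congr rfl fun i _ => hsum i
end

section
/- The combinatorial Springer map for type C is well defined and lands in X_C^{*2}: let λ be a partition of 2n in which every part has even multiplicity, and let χ : ℕ → ℕ satisfy (λ_i − 1)/2 ≤ χ(λ_i) ≤ λ_i, χ(λ_i) ≥ χ(λ_{i+1}), and λ_i − χ(λ_i) ≥ λ_{i+1} − χ(λ_{i+1}) for all i ≥ 1. Define μ_i = χ(λ_{2i−1}) and ν_i = λ_{2i−1} − χ(λ_{2i−1}). Then μ and ν are partitions, |μ| + |ν| = n, and ν_i ≤ μ_i + 1 for all i. -/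
open Finset

/-! Since every positive value of `λ` has even multiplicity, each upper level set
`{i | j ≤ λ_i}` has even size. For an antitone `λ` that set is an initial segment, so `λ` can only
drop right after an even position: `λ_{2i-1} = λ_{2i}`. Hence `μ_i + ν_i = λ_{2i-1}`
sums to `|λ| / 2 = n`; the remaining claims are the hypotheses on `χ` read at odd positions. -/

section

variable {l : ℕ → ℕ} {N : ℕ}

theorem even_card_filter_le_apply
    (hmult : ∀ j, 0 < j → Even #{i ∈ range N | l i = j}) {j : ℕ} (hj : 0 < j) :
    Even #{i ∈ range N | j ≤ l i} := by
  rw [card_eq_sum_card_image l]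
  refine even_sum _ fun v hv => ?_
  obtain ⟨i, hi, rfl⟩ := mem_image.1 hv
  rw [mem_filter] at hi
  rw [filter_filter, filter_congr fun k _ => and_iff_right_of_imp fun h : l k = l i => h ▸ hi.2]
  exact hmult (l i) (by omega)

theorem Antitone.filter_range_le_apply_eq_range (hanti : Antitone l) {k : ℕ} (hk : k < N)
    (hgap : l (k + 1) < l k) : {i ∈ range N | l k ≤ l i} = range (k + 1) := by
  ext i
  simp only [mem_filter, mem_range]
  constructor
  · rintro ⟨-, hi⟩
    by_contra! hki
    have := hanti hki
    omega
  · exact fun hi => ⟨by omega, hanti (by omega)⟩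

theorem Antitone.apply_two_mul_add_one_eq (hanti : Antitone l) (hN : ∀ i, N ≤ i → l i = 0)
    (hmult : ∀ j, 0 < j → Even #{i ∈ range N | l i = j}) (i : ℕ) :
    l (2 * i + 1) = l (2 * i) := by
  by_contra hne
  have hgap : l (2 * i + 1) < l (2 * i) := (hanti (Nat.le_succ _)).lt_of_ne hne
  have hk : 2 * i < N := by
    by_contra! h
    have := hN _ h
    omega
  have heven := even_card_filter_le_apply hmult (j := l (2 * i)) (by omega)
  rw [hanti.filter_range_le_apply_eq_range hk hgap, card_range] at heven
  exact Nat.not_even_two_mul_add_one i heven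

theorem sum_range_two_mul_of_apply_two_mul_add_one_eq (hpair : ∀ i, l (2 * i + 1) = l (2 * i))
    (M : ℕ) : ∑ i ∈ range (2 * M), l i = 2 * ∑ i ∈ range M, l (2 * i) := by
  induction M with
  | zero => simp
  | succ M ih =>
    rw [Nat.mul_succ, sum_range_succ, sum_range_succ, ih, sum_range_succ, hpair]
    ring

end

/-- `l` is 0-indexed: `l (2 * i)` is `λ_{2i+1}`, so `χ (l (2 * i))` is `μ_{i+1}`. -/
theorem springer_typeC (n N : ℕ) (l χ : ℕ → ℕ)
    (hanti : Antitone l) (hN : ∀ i, N ≤ i → l i = 0)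
    (hsum : ∑ i ∈ range N, l i = 2 * n)
    (hmult : ∀ j, 0 < j → Even (((range N).filter fun i => l i = j).card))
    (hχ1 : ∀ i, l i ≤ 2 * χ (l i) + 1)
    (hχ2 : ∀ i, χ (l i) ≤ l i)
    (hχ3 : ∀ i, χ (l (i + 1)) ≤ χ (l i))
    (hχ4 : ∀ i, l (i + 1) - χ (l (i + 1)) ≤ l i - χ (l i)) :
    Antitone (fun i => χ (l (2 * i))) ∧
    Antitone (fun i => l (2 * i) - χ (l (2 * i))) ∧
    (∀ i, N ≤ i → χ (l (2 * i)) = 0 ∧ l (2 * i) - χ (l (2 * i)) = 0) ∧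
    (∑ i ∈ range N, (χ (l (2 * i)) + (l (2 * i) - χ (l (2 * i))))) = n ∧
    (∀ i, l (2 * i) - χ (l (2 * i)) ≤ χ (l (2 * i)) + 1) := by
  have hμ : Antitone fun i => χ (l i) := antitone_nat_of_succ_le hχ3
  have hν : Antitone fun i => l i - χ (l i) := antitone_nat_of_succ_le hχ4
  have hsplit : ∀ i, χ (l i) + (l i - χ (l i)) = l i := fun i => Nat.add_sub_cancel' (hχ2 i)
  have hsum' : ∑ i ∈ range (2 * N), l i = 2 * n := by
    rw [← hsum]
    exact (sum_subset (range_subset_range.2 (by omega)) fun i _ hi => hN i (by simpa using hi)).symm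
  rw [sum_range_two_mul_of_apply_two_mul_add_one_eq (hanti.apply_two_mul_add_one_eq hN hmult)]
    at hsum'
  refine ⟨fun i j hij => hμ (by omega), fun i j hij => hν (by omega), fun i hi => ?_, ?_,
    fun i => by have := hχ1 (2 * i); omega⟩
  · have h0 := hN (2 * i) (by omega)
    have := hχ2 (2 * i)
    omega
  · simp only [hsplit]
    omega
end

section
/- Let V be a 2n-dimensional vector space over a field k of characteristic 2 with a nondegenerate symplectic form ⟨,⟩, and let sp(V) = {x ∈ gl(V) : ⟨xv,w⟩ + ⟨v,xw⟩ = 0 for all v,w ∈ V}. Then the map ξ ↦ α_ξ, where ξ(x) = tr(Xx) for all x ∈ sp(V) and α_ξ(v) = ⟨v, Xv⟩, is a well-defined linear isomorphism from the dual space sp(V)^* onto the space Q(V) of quadratic forms on V; in particular α_ξ does not depend on the choice of X ∈ gl(V) representing ξ. -/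
variable {k : Type*} [Field k] {V : Type*} [AddCommGroup V] [Module k V]

/-- The symplectic Lie algebra `sp(V, ⟨,⟩)` as a submodule of `End(V)`. -/
def spAlg (B : V →ₗ[k] V →ₗ[k] k) : Submodule k (Module.End k V) where
  carrier := {x | ∀ v w : V, B (x v) w + B v (x w) = 0}
  add_mem' := by
    intro x y hx hy
    intro v w
    have h1 := hx v w
    have h2 := hy v w
    simp only [LinearMap.add_apply, map_add, LinearMap.add_apply] at *
    linear_combination h1 + h2
  zero_mem' := by
    intro v w
    simp
  smul_mem' := by
    intro c x hx v w
    have h := hx v w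
    simp only [LinearMap.smul_apply, map_smul, LinearMap.smul_apply,
      smul_eq_mul] at *
    linear_combination c * h

/-! Both `sp(V)^*` and `Q(V)` are quotients of `End V`: the first by `X ↦ tr (X ·)|_{sp(V)}`,
which is onto because the trace pairing on `End V` is perfect, the second by
`X ↦ (v ↦ ⟨v, X v⟩)`, which is onto because nondegeneracy writes every bilinear form as
`⟨·, X ·⟩`. The two kernels coincide. If `tr (X ·)` kills `sp(V)`, testing it on the rank-one
elements `v ↦ ⟨w, v⟩ w` of `sp(V)` gives `⟨w, X w⟩ = 0`. Conversely, in a basis `e` and its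
dual basis `f`, `tr (X x) = ∑ c_ij a_ij` with `c_ij = ⟨x e_i, e_j⟩` symmetric for `x ∈ sp(V)` and
`a_ij = ⟨f_i, X f_j⟩` alternating when `⟨v, X v⟩ ≡ 0`; such a sum vanishes, also in
characteristic 2, since the diagonal of `a` vanishes. -/

open Module LinearMap
open LinearMap (BilinForm)

theorem Finset.sum_sum_mul_eq_zero_of_symm_of_alt {ι R : Type*} [Fintype ι] [CommRing R]
    {c a : ι → ι → R} (hc : ∀ i j, c i j = c j i) (ha : ∀ i j, a j i = -a i j)
    (ha₀ : ∀ i, a i i = 0) : ∑ i, ∑ j, c i j * a i j = 0 := by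
  rw [← Fintype.sum_prod_type']
  refine Finset.sum_ninvolution Prod.swap (fun p => ?_) (fun p hp hswap => hp ?_)
    (fun _ => Finset.mem_univ _) Prod.swap_swap
  · rw [Prod.fst_swap, Prod.snd_swap, hc p.2, ha p.1]
    ring
  · obtain ⟨i, j⟩ := p
    obtain rfl : j = i := congrArg Prod.fst hswap
    rw [ha₀, mul_zero]

theorem LinearMap.exists_linearEquiv_apply_eq_of_ker_eq {R M N P : Type*} [Ring R]
    [AddCommGroup M] [Module R M] [AddCommGroup N] [Module R N] [AddCommGroup P] [Module R P]
    (f : M →ₗ[R] N) (g : M →ₗ[R] P) (hf : Function.Surjective f)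
    (hg : Function.Surjective g) (h : ker f = ker g) :
    ∃ e : N ≃ₗ[R] P, ∀ x, e (f x) = g x :=
  ⟨(f.quotKerEquivOfSurjective hf).symm ≪≫ₗ Submodule.quotEquivOfEq _ _ h ≪≫ₗ
      g.quotKerEquivOfSurjective hg,
    fun x => by simp [quotKerEquivOfSurjective_symm_apply]⟩

lemma LinearMap.trace_mul_smulRight {R M : Type*} [CommRing R] [AddCommGroup M] [Module R M]
    [Module.Free R M] [Module.Finite R M] (X : End R M) (f : Dual R M) (u : M) :
    trace R M (X * f.smulRight u) = f (X u) := by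
  rw [show X * f.smulRight u = f.smulRight (X u) by ext; simp, trace_smulRight]

variable (k V) in
noncomputable def tracePairing : End k V →ₗ[k] Dual k (End k V) :=
  (LinearMap.mul k (End k V)).compr₂ (trace k V)

lemma tracePairing_injective [FiniteDimensional k V] :
    Function.Injective (tracePairing k V) := by
  refine (injective_iff_map_eq_zero _).2 fun X hX => LinearMap.ext fun v => ?_
  refine (Module.forall_dual_apply_eq_zero_iff k (X v)).1 fun f => ?_
  rw [← trace_mul_smulRight]
  exact LinearMap.congr_fun hX (f.smulRight v)

lemma tracePairing_surjective [FiniteDimensional k V] :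
    Function.Surjective (tracePairing k V) :=
  (injective_iff_surjective_of_finrank_eq_finrank Subspace.dual_finrank_eq.symm).1
    tracePairing_injective

lemma LinearMap.BilinForm.sum_smulRight_dualBasis {ι : Type*} [Fintype ι] [DecidableEq ι]
    {B : BilinForm k V} (hB : B.Nondegenerate) (b : Basis ι k V) (Y : End k V) :
    ∑ i, (B (B.dualBasis hB b i)).smulRight (Y (b i)) = Y :=
  b.ext fun l => by simp [apply_dualBasis_left]

lemma LinearMap.BilinForm.trace_eq_sum_dualBasis {ι : Type*} [Fintype ι] [DecidableEq ι]
    {B : BilinForm k V} (hB : B.Nondegenerate) (b : Basis ι k V) (Y : End k V) :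
    trace k V Y = ∑ i, B (B.dualBasis hB b i) (Y (b i)) := by
  have := b.finiteDimensional_of_finite
  conv_lhs => rw [← sum_smulRight_dualBasis hB b Y]
  simp [map_sum]

section Symplectic

variable (B : BilinForm k V)

noncomputable def spTraceDual : End k V →ₗ[k] Dual k (spAlg B) :=
  (spAlg B).dualRestrict ∘ₗ tracePairing k V

noncomputable def endToQuadraticMap : End k V →ₗ[k] QuadraticMap k V k :=
  BilinMap.toQuadraticMapLinearMap k k V ∘ₗ ((LinearMap.llcomp k V V k) ∘ₗ B).flip

@[simp]
lemma endToQuadraticMap_apply (X : End k V) (v : V) : endToQuadraticMap B X v = B v (X v) :=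
  rfl

variable {B}

lemma smulRight_self_mem_spAlg (hB : B.IsAlt) (w : V) : (B w).smulRight w ∈ spAlg B := by
  intro v u
  simp only [LinearMap.smulRight_apply, map_smul, LinearMap.smul_apply, smul_eq_mul]
  rw [← hB.neg_eq w v]
  ring

lemma apply_apply_comm_of_mem_spAlg (hB : B.IsAlt) {x : End k V} (hx : x ∈ spAlg B) (v w : V) :
    B (x v) w = B (x w) v := by
  rw [← hB.neg_eq v (x w)]
  linear_combination hx v w

variable [FiniteDimensional k V]

lemma ker_spTraceDual_le (hB : B.IsAlt) : ker (spTraceDual B) ≤ ker (endToQuadraticMap B) := by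
  intro X hX
  ext v
  have := LinearMap.congr_fun hX ⟨_, smulRight_self_mem_spAlg hB v⟩
  simpa [spTraceDual, tracePairing, trace_mul_smulRight] using this

lemma trace_mul_eq_zero_of_mem_spAlg (hB : B.IsAlt) (hBnd : B.Nondegenerate) {X x : End k V}
    (hX : ∀ v, B v (X v) = 0) (hx : x ∈ spAlg B) : trace k V (X * x) = 0 := by
  classical
  let b := Module.finBasis k V
  let f := B.dualBasis hBnd b
  have hXalt : (B.compl₂ X).IsAlt := hX
  have hexpand (u : V) : u = ∑ j, B u (b j) • f j := by
    conv_lhs => rw [← f.sum_repr u]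
    simp [f]
  calc trace k V (X * x) = ∑ i, B (f i) (X (x (b i))) :=
        BilinForm.trace_eq_sum_dualBasis hBnd b _
    _ = ∑ i, ∑ j, B (x (b i)) (b j) * B (f i) (X (f j)) := by
        refine Finset.sum_congr rfl fun i _ => ?_
        conv_lhs => rw [hexpand (x (b i))]
        simp [map_sum]
    _ = 0 := Finset.sum_sum_mul_eq_zero_of_symm_of_alt
        (fun i j => apply_apply_comm_of_mem_spAlg hB hx _ _)
        (fun i j => (hXalt.neg (f i) (f j)).symm) (fun i => hXalt _)

lemma ker_endToQuadraticMap_le (hB : B.IsAlt) (hBnd : B.Nondegenerate) :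
    ker (endToQuadraticMap B) ≤ ker (spTraceDual B) := by
  intro X hX
  ext ⟨x, hx⟩
  exact trace_mul_eq_zero_of_mem_spAlg hB hBnd (fun v => congr($hX v)) hx

variable (B) in
lemma spTraceDual_surjective : Function.Surjective (spTraceDual B) :=
  Subspace.dualRestrict_surjective.comp tracePairing_surjective

lemma endToQuadraticMap_surjective (hBnd : B.Nondegenerate) :
    Function.Surjective (endToQuadraticMap B) := by
  intro q
  obtain ⟨C, rfl⟩ := BilinMap.toQuadraticMap_surjective q
  exact ⟨BilinForm.symmCompOfNondegenerate C B.flip hBnd.flip,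
    QuadraticMap.ext fun v => BilinForm.symmCompOfNondegenerate_left_apply C hBnd.flip v v⟩

end Symplectic

theorem sp_dual_iso_quadraticForms_general [FiniteDimensional k V]
    (B : V →ₗ[k] V →ₗ[k] k)
    (halt : ∀ v, B v v = 0)
    (hnd : ∀ v, (∀ w, B v w = 0) → v = 0) :
    ∃ e : Module.Dual k (spAlg B) ≃ₗ[k] QuadraticMap k V k,
      ∀ (X : Module.End k V) (v : V),
        e (((LinearMap.trace k V) ∘ₗ (LinearMap.mulLeft k X)) ∘ₗ
            (spAlg B).subtype) v = B v (X v) := by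
  have hB : B.IsAlt := halt
  have hBnd : B.Nondegenerate := hB.isRefl.nondegenerate_iff_separatingLeft.2 hnd
  obtain ⟨e, he⟩ := (spTraceDual B).exists_linearEquiv_apply_eq_of_ker_eq
    (endToQuadraticMap B) (spTraceDual_surjective B) (endToQuadraticMap_surjective hBnd)
    ((ker_spTraceDual_le hB).antisymm (ker_endToQuadraticMap_le hB hBnd))
  exact ⟨e, fun X v => congr($(he X) v)⟩

/-- in characteristic 2, `ξ ↦ α_ξ` (where `ξ(x) = tr(X x)` and
`α_ξ(v) = ⟨v, X v⟩`) is a well-defined linear isomorphism from `sp(V)^*` onto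
the space of quadratic forms on `V`. -/
theorem sp_dual_iso_quadraticForms [CharP k 2] [FiniteDimensional k V]
    (n : ℕ) (hdim : Module.finrank k V = 2 * n)
    (B : V →ₗ[k] V →ₗ[k] k)
    (halt : ∀ v, B v v = 0)
    (hnd : ∀ v, (∀ w, B v w = 0) → v = 0) :
    ∃ e : Module.Dual k (spAlg B) ≃ₗ[k] QuadraticMap k V k,
      ∀ (X : Module.End k V) (v : V),
        e (((LinearMap.trace k V) ∘ₗ (LinearMap.mulLeft k X)) ∘ₗ
            (spAlg B).subtype) v = B v (X v) :=
  sp_dual_iso_quadraticForms_general B halt hnd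
end
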